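/- arXiv:0709.2337 — 2 statements merged into one kernel-verified Lean document; each statement's English description precedes it below -/
import Mathlib

section
/- Let Ω = (a,b) × (c,d) ⊆ ℝ² be an open rectangle containing the point (x₀,t₀), let ν : Ω → ℝ, and let f : Ω → ℝ be a positive twice continuously differentiable solution of f_xx − f_tt = νf on Ω. Let w = u + jv be a continuously differentiable 𝔻-valued function on Ω satisfying the Vekua equation w_z̄ = −(f_z/f)·w̄ on Ω. Set Φ₁ = u/f and Φ₂ = v/f, and for a real constant c define g(x,t) = f(x,t)·[2(∫_{x₀}^{x} Φ₁(η,t) dη + ∫_{t₀}^{t} Φ₂(x₀,ξ) dξ) + c]. Then g is a real-valued solution of the Klein-Gordon equation g_xx − g_tt = νg on Ω. -/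
noncomputable section

open Filter Topology MeasureTheory

/-- Hyperbolic (duplex) numbers 𝔻, modeled as pairs `(Re z, Im z)` with `j ^ 2 = 1`. -/
abbrev Hyp : Type := ℝ × ℝ

/-- Real part of a hyperbolic number. -/
def hre (a : Hyp) : ℝ := a.1

/-- Imaginary part of a hyperbolic number. -/
def him (a : Hyp) : ℝ := a.2

/-- The hyperbolic imaginary unit `j`. -/
def hj : Hyp := (0, 1)

/-- Hyperbolic multiplication: `(x+tj)(x'+t'j) = (xx'+tt') + (xt'+tx')j`. -/
def hmul (a b : Hyp) : Hyp := (a.1 * b.1 + a.2 * b.2, a.1 * b.2 + a.2 * b.1)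

/-- Hyperbolic conjugation: `conj (x+tj) = x - tj`. -/
def hconj (a : Hyp) : Hyp := (a.1, -a.2)

/-- Invertibility of a hyperbolic number: `x² ≠ t²`. -/
def IsInv (a : Hyp) : Prop := a.1 ^ 2 ≠ a.2 ^ 2

/-- Hyperbolic inverse `z⁻¹ = z̄ / |z|²` with `|z|² = x² - t²`. -/
def hinv (a : Hyp) : Hyp := (a.1 / (a.1 ^ 2 - a.2 ^ 2), -a.2 / (a.1 ^ 2 - a.2 ^ 2))

/-- Hyperbolic division. -/
def hdiv (a b : Hyp) : Hyp := hmul a (hinv b)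

/-- Partial derivative in the first (`x`) variable. -/
def pdx (g : Hyp → ℝ) (p : Hyp) : ℝ := deriv (fun s => g (s, p.2)) p.1

/-- Partial derivative in the second (`t`) variable. -/
def pdt (g : Hyp → ℝ) (p : Hyp) : ℝ := deriv (fun s => g (p.1, s)) p.2

/-- The wave operator `□g = g_xx - g_tt`. -/
def waveOp (g : Hyp → ℝ) (p : Hyp) : ℝ := pdx (pdx g) p - pdt (pdt g) p

/-- `w_z = ½(∂_x + j ∂_t) w = ½((u_x+v_t) + (v_x+u_t)j)` for a 𝔻-valued `w = u + jv`. -/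
def dz (w : Hyp → Hyp) (p : Hyp) : Hyp :=
  ((pdx (fun q => (w q).1) p + pdt (fun q => (w q).2) p) / 2,
   (pdx (fun q => (w q).2) p + pdt (fun q => (w q).1) p) / 2)

/-- `w_z̄ = ½(∂_x - j ∂_t) w = ½((u_x-v_t) + (v_x-u_t)j)` for a 𝔻-valued `w = u + jv`. -/
def dzbar (w : Hyp → Hyp) (p : Hyp) : Hyp :=
  ((pdx (fun q => (w q).1) p - pdt (fun q => (w q).2) p) / 2,
   (pdx (fun q => (w q).2) p - pdt (fun q => (w q).1) p) / 2)

/-- `f_z = ½(f_x + j f_t)` for a real-valued `f`. -/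
def rz (f : Hyp → ℝ) (p : Hyp) : Hyp := (pdx f p / 2, pdt f p / 2)

/-- `f_z̄ = ½(f_x - j f_t)` for a real-valued `f`. -/
def rzbar (f : Hyp → ℝ) (p : Hyp) : Hyp := (pdx f p / 2, -(pdt f p) / 2)

/-- 𝔻-differentiability at `z₀`: the difference quotient `(f z - f z₀)·(z - z₀)⁻¹`
tends to `d` as `z → z₀` through points with `z - z₀` invertible. -/
def HasHDerivAt (f : Hyp → Hyp) (d : Hyp) (z₀ : Hyp) : Prop :=
  Filter.Tendsto (fun z => hmul (f z - f z₀) (hinv (z - z₀)))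
    (nhdsWithin z₀ {z | IsInv (z - z₀)}) (nhds d)

/-- `F Ḡ - F̄ G`. -/
def pairDenom (F G : Hyp → Hyp) (z : Hyp) : Hyp :=
  hmul (F z) (hconj (G z)) - hmul (hconj (F z)) (G z)

/-- Characteristic coefficient `a_(F,G) = -(F̄ G_z̄ - F_z̄ Ḡ)/(F Ḡ - F̄ G)`. -/
def aFG (F G : Hyp → Hyp) (z : Hyp) : Hyp :=
  - hdiv (hmul (hconj (F z)) (dzbar G z) - hmul (dzbar F z) (hconj (G z))) (pairDenom F G z)

/-- Characteristic coefficient `b_(F,G) = (F G_z̄ - F_z̄ G)/(F Ḡ - F̄ G)`. -/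
def bFG (F G : Hyp → Hyp) (z : Hyp) : Hyp :=
  hdiv (hmul (F z) (dzbar G z) - hmul (dzbar F z) (G z)) (pairDenom F G z)

/-- Characteristic coefficient `A_(F,G) = -(F̄ G_z - F_z Ḡ)/(F Ḡ - F̄ G)`. -/
def AFG (F G : Hyp → Hyp) (z : Hyp) : Hyp :=
  - hdiv (hmul (hconj (F z)) (dz G z) - hmul (dz F z) (hconj (G z))) (pairDenom F G z)

/-- Characteristic coefficient `B_(F,G) = (F G_z - F_z G)/(F Ḡ - F̄ G)`. -/
def BFG (F G : Hyp → Hyp) (z : Hyp) : Hyp :=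
  hdiv (hmul (F z) (dz G z) - hmul (dz F z) (G z)) (pairDenom F G z)

/-- A generating pair on `Ω`: twice continuously differentiable `F, G` with `Im(F̄G) ≠ 0`. -/
def IsGenPair (F G : Hyp → Hyp) (Ω : Set Hyp) : Prop :=
  ContDiffOn ℝ 2 F Ω ∧ ContDiffOn ℝ 2 G Ω ∧ ∀ z ∈ Ω, him (hmul (hconj (F z)) (G z)) ≠ 0

/-- The idempotent `e₁ = (1+j)/2`. -/
def e1 : Hyp := (1/2, 1/2)

/-- The idempotent `e₂ = (1-j)/2`. -/
def e2 : Hyp := (1/2, -1/2)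

/-- Contour integral `∮_{∂R} h dz` over the counterclockwise boundary of the rectangle
`[x₁,x₂] × [t₁,t₂]`, with hyperbolic multiplication (`dz = dx` on horizontal sides,
`dz = j dt` on vertical sides). -/
def rectContourInt (h : Hyp → Hyp) (x₁ x₂ t₁ t₂ : ℝ) : Hyp :=
  ((∫ x in x₁..x₂, h (x, t₁)) - ∫ x in x₁..x₂, h (x, t₂)) +
    hmul hj ((∫ t in t₁..t₂, h (x₂, t)) - ∫ t in t₁..t₂, h (x₁, t))

/-- Integral `∫_{[z₀,z]} h dζ` along the straight segment from `z₀` to `z`,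
with hyperbolic multiplication. -/
def segInt (h : Hyp → Hyp) (z₀ z : Hyp) : Hyp :=
  ∫ s in (0:ℝ)..1, hmul (h (z₀ + s • (z - z₀))) (z - z₀)

/-- Natural powers in 𝔻. -/
def hpow (a : Hyp) : ℕ → Hyp
  | 0 => (1, 0)
  | n + 1 => hmul a (hpow a n)

/-- Integer powers in 𝔻 (for invertible base). -/
def hzpow (a : Hyp) : ℤ → Hyp
  | Int.ofNat n => hpow a n
  | Int.negSucc n => hinv (hpow a (n + 1))

/-! Write `Φ₁ = u/f`, `Φ₂ = v/f`. The two real components of the Vekua equation say that the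
form `Φ₁ dx + Φ₂ dt` is closed, `∂ₜΦ₁ = ∂ₓΦ₂`, and that `f (∂ₓΦ₁ - ∂ₜΦ₂) = -2 (fₓΦ₁ - fₜΦ₂)`.
By Green's theorem on rectangles the bracket `G = ∫ Φ₁ dx + ∫ Φ₂ dt` is then a potential,
`Gₓ = Φ₁`, `Gₜ = Φ₂`, and the product rule `□(f h) = (□f) h + 2 (fₓhₓ - fₜhₜ) + f □h` with
`h = 2G + c` gives `□g = ν g + 4 (fₓΦ₁ - fₜΦ₂) + 2 f (∂ₓΦ₁ - ∂ₜΦ₂) = ν g`. -/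

open Set
open scoped Interval

section PartialDerivatives

variable {F G : ℝ × ℝ → ℝ} {p : ℝ × ℝ}

theorem DifferentiableAt.hasDerivAt_pdx (h : DifferentiableAt ℝ F p) :
    HasDerivAt (fun s => F (s, p.2)) (pdx F p) p.1 :=
  (h.comp p.1 (by fun_prop : DifferentiableAt ℝ (fun s : ℝ => (s, p.2)) p.1)).hasDerivAt

theorem DifferentiableAt.hasDerivAt_pdt (h : DifferentiableAt ℝ F p) :
    HasDerivAt (fun s => F (p.1, s)) (pdt F p) p.2 :=
  (h.comp p.2 (by fun_prop : DifferentiableAt ℝ (fun s : ℝ => (p.1, s)) p.2)).hasDerivAt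

theorem DifferentiableAt.pdx_eq_fderiv (h : DifferentiableAt ℝ F p) :
    pdx F p = fderiv ℝ F p (1, 0) :=
  (h.hasFDerivAt.comp_hasDerivAt p.1
    ((hasDerivAt_id p.1).prodMk (hasDerivAt_const p.1 p.2))).deriv

theorem DifferentiableAt.pdt_eq_fderiv (h : DifferentiableAt ℝ F p) :
    pdt F p = fderiv ℝ F p (0, 1) :=
  (h.hasFDerivAt.comp_hasDerivAt p.2
    ((hasDerivAt_const p.2 p.1).prodMk (hasDerivAt_id p.2))).deriv

theorem pdx_div (hF : DifferentiableAt ℝ F p) (hG : DifferentiableAt ℝ G p) (hGp : G p ≠ 0) :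
    pdx (fun q => F q / G q) p = (pdx F p * G p - F p * pdx G p) / G p ^ 2 :=
  (hF.hasDerivAt_pdx.div hG.hasDerivAt_pdx hGp).deriv

theorem pdt_div (hF : DifferentiableAt ℝ F p) (hG : DifferentiableAt ℝ G p) (hGp : G p ≠ 0) :
    pdt (fun q => F q / G q) p = (pdt F p * G p - F p * pdt G p) / G p ^ 2 :=
  (hF.hasDerivAt_pdt.div hG.hasDerivAt_pdt hGp).deriv

theorem ContDiffOn.pdx {U : Set (ℝ × ℝ)} {m n : WithTop ℕ∞} (hF : ContDiffOn ℝ n F U)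
    (hU : IsOpen U) (hmn : m + 1 ≤ n) : ContDiffOn ℝ m (pdx F) U :=
  ((hF.fderiv_of_isOpen hU hmn).clm_apply contDiffOn_const).congr fun _ hq =>
    ((hF.contDiffAt (hU.mem_nhds hq)).differentiableAt
      (zero_lt_one.trans_le (le_add_self.trans hmn)).ne').pdx_eq_fderiv

theorem ContDiffOn.pdt {U : Set (ℝ × ℝ)} {m n : WithTop ℕ∞} (hF : ContDiffOn ℝ n F U)
    (hU : IsOpen U) (hmn : m + 1 ≤ n) : ContDiffOn ℝ m (pdt F) U :=
  ((hF.fderiv_of_isOpen hU hmn).clm_apply contDiffOn_const).congr fun _ hq =>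
    ((hF.contDiffAt (hU.mem_nhds hq)).differentiableAt
      (zero_lt_one.trans_le (le_add_self.trans hmn)).ne').pdt_eq_fderiv

end PartialDerivatives

theorem deriv_deriv_mul_of_hasDerivAt {φ ψ φ' ψ' : ℝ → ℝ} {φ'' ψ'' x : ℝ}
    (hφ : ∀ᶠ y in 𝓝 x, HasDerivAt φ (φ' y) y) (hψ : ∀ᶠ y in 𝓝 x, HasDerivAt ψ (ψ' y) y)
    (hφ' : HasDerivAt φ' φ'' x) (hψ' : HasDerivAt ψ' ψ'' x) :
    deriv (deriv fun y => φ y * ψ y) x = φ'' * ψ x + 2 * (φ' x * ψ' x) + φ x * ψ'' := by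
  have hd : deriv (fun y => φ y * ψ y) =ᶠ[𝓝 x] fun y => φ' y * ψ y + φ y * ψ' y := by
    filter_upwards [hφ, hψ] with y h₁ h₂
    exact (h₁.mul h₂).deriv
  rw [hd.deriv_eq]
  exact ((hφ'.mul hψ.self_of_nhds).add (hφ.self_of_nhds.mul hψ')).deriv.trans (by ring)

section WaveOperator

variable {F H Hx Ht : ℝ × ℝ → ℝ} {Hxx Htt : ℝ} {U : Set (ℝ × ℝ)} {p : ℝ × ℝ}

theorem pdx_pdx_mul (hU : IsOpen U) (hp : p ∈ U) (hF : ContDiffOn ℝ 2 F U)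
    (hH : ∀ q ∈ U, HasDerivAt (fun s => H (s, q.2)) (Hx q) q.1)
    (hHx : HasDerivAt (fun s => Hx (s, p.2)) Hxx p.1) :
    pdx (pdx fun q => F q * H q) p = pdx (pdx F) p * H p + 2 * (pdx F p * Hx p) + F p * Hxx := by
  have hline : ∀ᶠ s in 𝓝 p.1, (s, p.2) ∈ U :=
    (Continuous.prodMk_left p.2).continuousAt.preimage_mem_nhds (hU.mem_nhds hp)
  have hFx : DifferentiableAt ℝ (pdx F) p :=
    ((hF.pdx (m := 1) hU (by norm_num)).differentiableOn one_ne_zero).differentiableAt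
      (hU.mem_nhds hp)
  exact deriv_deriv_mul_of_hasDerivAt (φ := fun s => F (s, p.2)) (ψ := fun s => H (s, p.2))
    (hline.mono fun s hs => (hF.contDiffAt (hU.mem_nhds hs)).differentiableAt (by norm_num)
      |>.hasDerivAt_pdx)
    (hline.mono fun s hs => hH _ hs) hFx.hasDerivAt_pdx hHx

theorem pdt_pdt_mul (hU : IsOpen U) (hp : p ∈ U) (hF : ContDiffOn ℝ 2 F U)
    (hH : ∀ q ∈ U, HasDerivAt (fun s => H (q.1, s)) (Ht q) q.2)
    (hHt : HasDerivAt (fun s => Ht (p.1, s)) Htt p.2) :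
    pdt (pdt fun q => F q * H q) p = pdt (pdt F) p * H p + 2 * (pdt F p * Ht p) + F p * Htt := by
  have hline : ∀ᶠ s in 𝓝 p.2, (p.1, s) ∈ U :=
    (Continuous.prodMk_right p.1).continuousAt.preimage_mem_nhds (hU.mem_nhds hp)
  have hFt : DifferentiableAt ℝ (pdt F) p :=
    ((hF.pdt (m := 1) hU (by norm_num)).differentiableOn one_ne_zero).differentiableAt
      (hU.mem_nhds hp)
  exact deriv_deriv_mul_of_hasDerivAt (φ := fun s => F (p.1, s)) (ψ := fun s => H (p.1, s))
    (hline.mono fun s hs => (hF.contDiffAt (hU.mem_nhds hs)).differentiableAt (by norm_num)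
      |>.hasDerivAt_pdt)
    (hline.mono fun s hs => hH _ hs) hFt.hasDerivAt_pdt hHt

theorem waveOp_mul (hU : IsOpen U) (hp : p ∈ U) (hF : ContDiffOn ℝ 2 F U)
    (hHx : ∀ q ∈ U, HasDerivAt (fun s => H (s, q.2)) (Hx q) q.1)
    (hHxx : HasDerivAt (fun s => Hx (s, p.2)) Hxx p.1)
    (hHt : ∀ q ∈ U, HasDerivAt (fun s => H (q.1, s)) (Ht q) q.2)
    (hHtt : HasDerivAt (fun s => Ht (p.1, s)) Htt p.2) :
    waveOp (fun q => F q * H q) p =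
      waveOp F p * H p + 2 * (pdx F p * Hx p - pdt F p * Ht p) + F p * (Hxx - Htt) := by
  rw [waveOp, waveOp, pdx_pdx_mul hU hp hF hHx hHxx, pdt_pdt_mul hU hp hF hHt hHtt]
  ring

end WaveOperator

theorem hasDerivAt_integral_of_continuousOn_Ioo {φ : ℝ → ℝ} {a b x₀ x : ℝ}
    (hφ : ContinuousOn φ (Ioo a b)) (hx₀ : x₀ ∈ Ioo a b) (hx : x ∈ Ioo a b) :
    HasDerivAt (fun s => ∫ η in x₀..s, φ η) (φ x) x :=
  intervalIntegral.integral_hasDerivAt_right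
    ((hφ.mono (ordConnected_Ioo.uIcc_subset hx₀ hx)).intervalIntegrable)
    (hφ.stronglyMeasurableAtFilter isOpen_Ioo x hx) (hφ.continuousAt (Ioo_mem_nhds hx.1 hx.2))

theorem circulation_rect_eq_zero_of_pdt_eq_pdx {P Q : ℝ × ℝ → ℝ} {x₀ x₁ t₀ t₁ : ℝ}
    (hP : ∀ p ∈ [[x₀, x₁]] ×ˢ [[t₀, t₁]], DifferentiableAt ℝ P p)
    (hQ : ∀ p ∈ [[x₀, x₁]] ×ˢ [[t₀, t₁]], DifferentiableAt ℝ Q p)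
    (hPQ : ∀ p ∈ [[x₀, x₁]] ×ˢ [[t₀, t₁]], pdt P p = pdx Q p) :
    (∫ η in x₀..x₁, P (η, t₀)) - (∫ η in x₀..x₁, P (η, t₁)) +
      (∫ ξ in t₀..t₁, Q (x₁, ξ)) - (∫ ξ in t₀..t₁, Q (x₀, ξ)) = 0 := by
  have hcurl : EqOn (fun p => fderiv ℝ Q p (1, 0) + (-fderiv ℝ P p) (0, 1)) 0
      ([[x₀, x₁]] ×ˢ [[t₀, t₁]]) := fun p hp => by
    simp [← (hQ p hp).pdx_eq_fderiv, ← (hP p hp).pdt_eq_fderiv, hPQ p hp]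
  have hinterior : Ioo (min x₀ x₁) (max x₀ x₁) ×ˢ Ioo (min t₀ t₁) (max t₀ t₁) ⊆
      [[x₀, x₁]] ×ˢ [[t₀, t₁]] :=
    prod_mono Ioo_subset_Icc_self Ioo_subset_Icc_self
  -- Green's theorem for the field `(Q, -P)`, whose divergence `Qₓ - Pₜ` vanishes.
  have hgreen := integral2_divergence_prod_of_hasFDerivAt Q (fun q => -P q) _ _ x₀ t₀ x₁ t₁
    (fun p hp => (hQ p hp).continuousAt.continuousWithinAt)
    (fun p hp => (hP p hp).continuousAt.neg.continuousWithinAt)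
    (fun p hp => (hQ p (hinterior hp)).hasFDerivAt)
    (fun p hp => (hP p (hinterior hp)).hasFDerivAt.neg)
    (integrableOn_zero.congr_fun hcurl.symm (measurableSet_uIcc.prod measurableSet_uIcc))
  have hflat : (∫ η in x₀..x₁, ∫ ξ in t₀..t₁,
      fderiv ℝ Q (η, ξ) (1, 0) + (-fderiv ℝ P (η, ξ)) (0, 1)) = 0 := by
    refine (intervalIntegral.integral_congr fun η hη => ?_).trans intervalIntegral.integral_zero
    exact (intervalIntegral.integral_congr fun ξ hξ => hcurl ⟨hη, hξ⟩).trans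
      intervalIntegral.integral_zero
  simp only [intervalIntegral.integral_neg] at hgreen
  linarith

def rectPotential (P Q : ℝ × ℝ → ℝ) (x₀ t₀ : ℝ) (p : ℝ × ℝ) : ℝ :=
  (∫ η in x₀..p.1, P (η, p.2)) + ∫ ξ in t₀..p.2, Q (x₀, ξ)

section RectPotential

variable {a b c d x₀ t₀ : ℝ} {P Q : ℝ × ℝ → ℝ} {p : ℝ × ℝ}

theorem uIcc_prod_uIcc_subset {q : ℝ × ℝ} (hp : p ∈ Ioo a b ×ˢ Ioo c d)
    (hq : q ∈ Ioo a b ×ˢ Ioo c d) : [[p.1, q.1]] ×ˢ [[p.2, q.2]] ⊆ Ioo a b ×ˢ Ioo c d :=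
  prod_mono (ordConnected_Ioo.uIcc_subset hp.1 hq.1) (ordConnected_Ioo.uIcc_subset hp.2 hq.2)

theorem hasDerivAt_rectPotential_fst (hP : ContinuousOn P (Ioo a b ×ˢ Ioo c d))
    (h₀ : (x₀, t₀) ∈ Ioo a b ×ˢ Ioo c d) (hp : p ∈ Ioo a b ×ˢ Ioo c d) :
    HasDerivAt (fun s => rectPotential P Q x₀ t₀ (s, p.2)) (P p) p.1 := by
  simp only [rectPotential]
  exact (hasDerivAt_integral_of_continuousOn_Ioo (φ := fun η => P (η, p.2)) (x₀ := x₀)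
    (hP.comp (Continuous.prodMk_left p.2).continuousOn
      fun _ hs => ⟨hs, hp.2⟩) h₀.1 hp.1).add_const _

theorem rectPotential_eq_of_pdt_eq_pdx (hP : DifferentiableOn ℝ P (Ioo a b ×ˢ Ioo c d))
    (hQ : DifferentiableOn ℝ Q (Ioo a b ×ˢ Ioo c d))
    (hPQ : ∀ q ∈ Ioo a b ×ˢ Ioo c d, pdt P q = pdx Q q)
    (h₀ : (x₀, t₀) ∈ Ioo a b ×ˢ Ioo c d) (hp : p ∈ Ioo a b ×ˢ Ioo c d) :
    rectPotential P Q x₀ t₀ p = (∫ η in x₀..p.1, P (η, t₀)) + ∫ ξ in t₀..p.2, Q (p.1, ξ) := by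
  have hrect := uIcc_prod_uIcc_subset h₀ hp
  have hopen : IsOpen (Ioo a b ×ˢ Ioo c d) := isOpen_Ioo.prod isOpen_Ioo
  have := circulation_rect_eq_zero_of_pdt_eq_pdx
    (fun q hq => hP.differentiableAt (hopen.mem_nhds (hrect hq)))
    (fun q hq => hQ.differentiableAt (hopen.mem_nhds (hrect hq))) (fun q hq => hPQ q (hrect hq))
  rw [rectPotential]
  linarith

theorem hasDerivAt_rectPotential_snd (hP : DifferentiableOn ℝ P (Ioo a b ×ˢ Ioo c d))
    (hQ : DifferentiableOn ℝ Q (Ioo a b ×ˢ Ioo c d))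
    (hPQ : ∀ q ∈ Ioo a b ×ˢ Ioo c d, pdt P q = pdx Q q)
    (h₀ : (x₀, t₀) ∈ Ioo a b ×ˢ Ioo c d) (hp : p ∈ Ioo a b ×ˢ Ioo c d) :
    HasDerivAt (fun s => rectPotential P Q x₀ t₀ (p.1, s)) (Q p) p.2 := by
  have hFTC := (hasDerivAt_integral_of_continuousOn_Ioo (φ := fun ξ => Q (p.1, ξ)) (x₀ := t₀)
    (hQ.continuousOn.comp (Continuous.prodMk_right p.1).continuousOn
      fun _ hs => ⟨hp.1, hs⟩) h₀.2 hp.2).const_add (∫ η in x₀..p.1, P (η, t₀))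
  refine hFTC.congr_of_eventuallyEq ?_
  filter_upwards [Ioo_mem_nhds hp.2.1 hp.2.2] with s hs
  exact rectPotential_eq_of_pdt_eq_pdx hP hQ hPQ h₀ ⟨hp.1, hs⟩

end RectPotential

section Vekua

variable {f : ℝ × ℝ → ℝ} {w : ℝ × ℝ → Hyp} {p : ℝ × ℝ}

theorem vekua_components (hfp : f p ≠ 0)
    (h : dzbar w p = -hmul (hdiv (rz f p) (f p, 0)) (hconj (w p))) :
    f p * (pdx (fun q => (w q).1) p - pdt (fun q => (w q).2) p) =
        pdt f p * (w p).2 - pdx f p * (w p).1 ∧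
      f p * (pdx (fun q => (w q).2) p - pdt (fun q => (w q).1) p) =
        pdx f p * (w p).2 - pdt f p * (w p).1 := by
  simp only [dzbar, hdiv, hmul, hinv, hconj, rz, Prod.mk.injEq, Prod.neg_mk] at h
  obtain ⟨h₁, h₂⟩ := h
  field_simp at h₁ h₂
  exact ⟨mul_left_cancel₀ hfp (by linear_combination h₁),
    mul_left_cancel₀ hfp (by linear_combination h₂)⟩

theorem pdt_div_eq_pdx_div_of_vekua (hu : DifferentiableAt ℝ (fun q => (w q).1) p)
    (hv : DifferentiableAt ℝ (fun q => (w q).2) p) (hf : DifferentiableAt ℝ f p) (hfp : f p ≠ 0)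
    (h : dzbar w p = -hmul (hdiv (rz f p) (f p, 0)) (hconj (w p))) :
    pdt (fun q => (w q).1 / f q) p = pdx (fun q => (w q).2 / f q) p := by
  rw [pdt_div hu hf hfp, pdx_div hv hf hfp]
  congr 1
  linear_combination -(vekua_components hfp h).2

theorem mul_pdx_div_sub_pdt_div_of_vekua (hu : DifferentiableAt ℝ (fun q => (w q).1) p)
    (hv : DifferentiableAt ℝ (fun q => (w q).2) p) (hf : DifferentiableAt ℝ f p) (hfp : f p ≠ 0)
    (h : dzbar w p = -hmul (hdiv (rz f p) (f p, 0)) (hconj (w p))) :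
    f p * (pdx (fun q => (w q).1 / f q) p - pdt (fun q => (w q).2 / f q) p) =
      -2 * (pdx f p * ((w p).1 / f p) - pdt f p * ((w p).2 / f p)) := by
  rw [pdx_div hu hf hfp, pdt_div hv hf hfp]
  field_simp
  linear_combination (vekua_components hfp h).1

end Vekua

/-- if `f > 0` is a C² solution of `□f = νf` on an open rectangle `Ω` and
`w = u + jv ∈ C¹(Ω)` solves `w_z̄ = −(f_z/f)w̄`, then with `Φ₁ = u/f`, `Φ₂ = v/f`, the
function `g = f·[2(∫_{x₀}^{x} Φ₁(η,t) dη + ∫_{t₀}^{t} Φ₂(x₀,ξ) dξ) + c]` solves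
`g_xx − g_tt = νg` on `Ω`. -/
theorem solution_kleinGordon_from_vekua (a b c d x₀ t₀ : ℝ) (Ω : Set Hyp)
    (hΩ : Ω = Set.Ioo a b ×ˢ Set.Ioo c d) (hz₀ : ((x₀, t₀) : Hyp) ∈ Ω)
    (ν f : Hyp → ℝ) (hf : ContDiffOn ℝ 2 f Ω) (hfpos : ∀ p ∈ Ω, 0 < f p)
    (hKG : ∀ p ∈ Ω, waveOp f p = ν p * f p)
    (w : Hyp → Hyp) (hw : ContDiffOn ℝ 1 w Ω)
    (hVekua : ∀ p ∈ Ω, dzbar w p = - hmul (hdiv (rz f p) (f p, 0)) (hconj (w p)))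
    (c₀ : ℝ) (g : Hyp → ℝ)
    (hg : ∀ p : Hyp, g p =
      f p * (2 * ((∫ η in x₀..p.1, (w (η, p.2)).1 / f (η, p.2)) +
        ∫ ξ in t₀..p.2, (w (x₀, ξ)).2 / f (x₀, ξ)) + c₀)) :
    ∀ p ∈ Ω, waveOp g p = ν p * g p := by
  subst hΩ
  have hΩ : IsOpen (Ioo a b ×ˢ Ioo c d) := isOpen_Ioo.prod isOpen_Ioo
  have hdiff {F : Hyp → ℝ} (hF : ContDiffOn ℝ 1 F (Ioo a b ×ˢ Ioo c d)) {q : Hyp}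
      (hq : q ∈ Ioo a b ×ˢ Ioo c d) : DifferentiableAt ℝ F q :=
    (hF.differentiableOn one_ne_zero).differentiableAt (hΩ.mem_nhds hq)
  have hfp : ∀ q ∈ Ioo a b ×ˢ Ioo c d, f q ≠ 0 := fun q hq => (hfpos q hq).ne'
  have hf₁ : ContDiffOn ℝ 1 f (Ioo a b ×ˢ Ioo c d) := hf.of_le one_le_two
  have hu : ContDiffOn ℝ 1 (fun q => (w q).1) (Ioo a b ×ˢ Ioo c d) :=
    contDiff_fst.comp_contDiffOn hw
  have hv : ContDiffOn ℝ 1 (fun q => (w q).2) (Ioo a b ×ˢ Ioo c d) :=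
    contDiff_snd.comp_contDiffOn hw
  have hP : ContDiffOn ℝ 1 (fun q => (w q).1 / f q) (Ioo a b ×ˢ Ioo c d) := hu.div hf₁ hfp
  have hQ : ContDiffOn ℝ 1 (fun q => (w q).2 / f q) (Ioo a b ×ˢ Ioo c d) := hv.div hf₁ hfp
  have hPQ : ∀ q ∈ Ioo a b ×ˢ Ioo c d,
      pdt (fun q => (w q).1 / f q) q = pdx (fun q => (w q).2 / f q) q := fun q hq =>
    pdt_div_eq_pdx_div_of_vekua (hdiff hu hq) (hdiff hv hq) (hdiff hf₁ hq) (hfp q hq)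
      (hVekua q hq)
  intro p hp
  have hg' : g = fun q => f q *
      (2 * rectPotential (fun q => (w q).1 / f q) (fun q => (w q).2 / f q) x₀ t₀ q + c₀) :=
    funext hg
  rw [hg', waveOp_mul hΩ hp hf
      (fun q hq =>
        ((hasDerivAt_rectPotential_fst hP.continuousOn hz₀ hq).const_mul 2).add_const c₀)
      ((hdiff hP hp).hasDerivAt_pdx.const_mul 2)
      (fun q hq => ((hasDerivAt_rectPotential_snd (hP.differentiableOn one_ne_zero)
        (hQ.differentiableOn one_ne_zero) hPQ hz₀ hq).const_mul 2).add_const c₀)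
      ((hdiff hQ hp).hasDerivAt_pdt.const_mul 2),
    hKG p hp]
  linear_combination 2 * mul_pdx_div_sub_pdt_div_of_vekua (hdiff hu hp) (hdiff hv hp)
    (hdiff hf₁ hp) (hfp p hp) (hVekua p hp)
end
end

section
/- Let Ω ⊆ ℝ² be open and let f : Ω → ℝ be positive and twice continuously differentiable. If W : Ω → 𝔻 is continuously differentiable and satisfies the main Vekua equation W_z̄ = (f_z̄/f)·W̄ on Ω, and if the function w := W_z − (f_z/f)·W̄ is continuously differentiable on Ω, then w satisfies the Vekua equation w_z̄ = −(f_z/f)·w̄ on Ω. -/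
/-!
Write `φ = f_z/f = (log f)_z` and `ψ = f_z̄/f = (log f)_z̄ = φ̄`. Differentiating
`w = W_z − φ W̄` and using `∂_z̄ ∂_z W = ∂_z ∂_z̄ W = ∂_z (ψ W̄)` gives
`w_z̄ = (ψ_z − φ_z̄) W̄ + ψ ψ̄ W − φ conj(W_z)`. Here `ψ_z = φ_z̄` since both are `(log f)_zz̄`,
and what remains is `−φ w̄`. The one analytic point is that `∂_z` and `∂_z̄` commute on `W`,
which is only `C¹`: the main Vekua equation and the definition of `w` express `W_z̄` and `W_z`
through `w`, `W` and `f`, so the first derivative of `W` is differentiable and the symmetry of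
second derivatives applies.
-/

noncomputable section

open Filter Topology MeasureTheory

def hmulL : Hyp →L[ℝ] Hyp →L[ℝ] Hyp :=
  (ContinuousLinearMap.fst ℝ ℝ ℝ).smulRight (ContinuousLinearMap.id ℝ Hyp) +
    (ContinuousLinearMap.snd ℝ ℝ ℝ).smulRight
      (ContinuousLinearEquiv.prodComm ℝ ℝ ℝ : Hyp →L[ℝ] Hyp)

@[simp] lemma hmulL_apply (a b : Hyp) : hmulL a b = hmul a b := by
  ext <;> simp [hmulL, hmul]

def hconjL : Hyp →L[ℝ] Hyp :=
  (ContinuousLinearMap.fst ℝ ℝ ℝ).prod (-ContinuousLinearMap.snd ℝ ℝ ℝ)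

@[simp] lemma hconjL_apply (a : Hyp) : hconjL a = hconj a := rfl

def dzL : (Hyp →L[ℝ] Hyp) →L[ℝ] Hyp :=
  (2⁻¹ : ℝ) • (ContinuousLinearMap.apply ℝ Hyp ((1, 0) : Hyp) +
    (hmulL hj).comp (ContinuousLinearMap.apply ℝ Hyp ((0, 1) : Hyp)))

def dzbarL : (Hyp →L[ℝ] Hyp) →L[ℝ] Hyp :=
  (2⁻¹ : ℝ) • (ContinuousLinearMap.apply ℝ Hyp ((1, 0) : Hyp) -
    (hmulL hj).comp (ContinuousLinearMap.apply ℝ Hyp ((0, 1) : Hyp)))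

lemma dzL_apply (L : Hyp →L[ℝ] Hyp) :
    dzL L = (2⁻¹ : ℝ) • (L (1, 0) + hmul hj (L (0, 1))) := by
  simp [dzL]

lemma dzbarL_apply (L : Hyp →L[ℝ] Hyp) :
    dzbarL L = (2⁻¹ : ℝ) • (L (1, 0) - hmul hj (L (0, 1))) := by
  simp [dzbarL]

def ofDzDzbar (a b : Hyp) : Hyp →L[ℝ] Hyp :=
  ContinuousLinearMap.smulRightL ℝ Hyp Hyp (ContinuousLinearMap.fst ℝ ℝ ℝ) (a + b) +
    ContinuousLinearMap.smulRightL ℝ Hyp Hyp (ContinuousLinearMap.snd ℝ ℝ ℝ) (hmulL hj (a - b))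

lemma ofDzDzbar_dzL_dzbarL (L : Hyp →L[ℝ] Hyp) : ofDzDzbar (dzL L) (dzbarL L) = L := by
  ext <;> simp [ofDzDzbar, dzL_apply, dzbarL_apply, hmul, hj] <;> ring

lemma dzL_ofDzDzbar (a b : Hyp) : dzL (ofDzDzbar a b) = a := by
  ext <;> simp [ofDzDzbar, dzL_apply, hmul, hj] <;> ring

lemma dzbarL_ofDzDzbar (a b : Hyp) : dzbarL (ofDzDzbar a b) = b := by
  ext <;> simp [ofDzDzbar, dzbarL_apply, hmul, hj] <;> ring

lemma dzbarL_comp_dzL {B : Hyp →L[ℝ] Hyp →L[ℝ] Hyp} (hB : B (1, 0) (0, 1) = B (0, 1) (1, 0)) :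
    dzbarL (dzL.comp B) = dzL (dzbarL.comp B) := by
  simp only [dzL_apply, dzbarL_apply, ContinuousLinearMap.comp_apply, hB]
  ext <;> simp [hmul, hj] <;> ring

section

open scoped ContDiff

variable {E : Type*} [NormedAddCommGroup E] [NormedSpace ℝ E] {p : Hyp}

lemma tendsto_lineX : Tendsto (fun s : ℝ => ((s, p.2) : Hyp)) (𝓝 p.1) (𝓝 p) :=
  (continuous_id.prodMk continuous_const).tendsto p.1

lemma tendsto_lineT : Tendsto (fun s : ℝ => ((p.1, s) : Hyp)) (𝓝 p.2) (𝓝 p) :=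
  (continuous_const.prodMk continuous_id).tendsto p.2

lemma HasFDerivAt.hasDerivAt_lineX {g : Hyp → E} {L : Hyp →L[ℝ] E} (h : HasFDerivAt g L p) :
    HasDerivAt (fun s => g (s, p.2)) (L (1, 0)) p.1 := by
  simpa [Function.comp_def] using
    h.comp_hasDerivAt p.1 ((hasDerivAt_id p.1).prodMk (hasDerivAt_const p.1 p.2))

lemma HasFDerivAt.hasDerivAt_lineT {g : Hyp → E} {L : Hyp →L[ℝ] E} (h : HasFDerivAt g L p) :
    HasDerivAt (fun s => g (p.1, s)) (L (0, 1)) p.2 := by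
  simpa [Function.comp_def] using
    h.comp_hasDerivAt p.2 ((hasDerivAt_const p.2 p.1).prodMk (hasDerivAt_id p.2))

lemma ContDiffAt.eventually_differentiableAt {F : Type*} [NormedAddCommGroup F]
    [NormedSpace ℝ F] {g : E → F} {x : E} {n : WithTop ℕ∞} (h : ContDiffAt ℝ n g x)
    (hn : n ≠ 0) (hn' : n ≠ ∞) : ∀ᶠ y in 𝓝 x, DifferentiableAt ℝ g y :=
  (h.eventually hn').mono fun _ hy => hy.differentiableAt hn

end

section Wirtinger

variable {p : Hyp} {F G : Hyp → Hyp}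

lemma HasFDerivAt.pdx_eq {g : Hyp → ℝ} {L : Hyp →L[ℝ] ℝ} (h : HasFDerivAt g L p) :
    pdx g p = L (1, 0) :=
  h.hasDerivAt_lineX.deriv

lemma HasFDerivAt.pdt_eq {g : Hyp → ℝ} {L : Hyp →L[ℝ] ℝ} (h : HasFDerivAt g L p) :
    pdt g p = L (0, 1) :=
  h.hasDerivAt_lineT.deriv

lemma HasFDerivAt.dz_eq {L : Hyp →L[ℝ] Hyp} (h : HasFDerivAt F L p) : dz F p = dzL L := by
  simp only [dz, h.fst.pdx_eq, h.snd.pdx_eq, h.fst.pdt_eq, h.snd.pdt_eq, dzL_apply]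
  ext <;> simp [hmul, hj] <;> ring

lemma HasFDerivAt.dzbar_eq {L : Hyp →L[ℝ] Hyp} (h : HasFDerivAt F L p) :
    dzbar F p = dzbarL L := by
  simp only [dzbar, h.fst.pdx_eq, h.snd.pdx_eq, h.fst.pdt_eq, h.snd.pdt_eq, dzbarL_apply]
  ext <;> simp [hmul, hj] <;> ring

lemma Filter.EventuallyEq.pdx_eq {g h : Hyp → ℝ} (hgh : g =ᶠ[𝓝 p] h) : pdx g p = pdx h p :=
  Filter.EventuallyEq.deriv_eq (tendsto_lineX.eventually hgh)

lemma Filter.EventuallyEq.pdt_eq {g h : Hyp → ℝ} (hgh : g =ᶠ[𝓝 p] h) : pdt g p = pdt h p :=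
  Filter.EventuallyEq.deriv_eq (tendsto_lineT.eventually hgh)

lemma Filter.EventuallyEq.dz_eq (h : F =ᶠ[𝓝 p] G) : dz F p = dz G p := by
  have h1 : (fun q => (F q).1) =ᶠ[𝓝 p] fun q => (G q).1 := h.fun_comp Prod.fst
  have h2 : (fun q => (F q).2) =ᶠ[𝓝 p] fun q => (G q).2 := h.fun_comp Prod.snd
  simp only [dz, h1.pdx_eq, h1.pdt_eq, h2.pdx_eq, h2.pdt_eq]

lemma Filter.EventuallyEq.dzbar_eq (h : F =ᶠ[𝓝 p] G) : dzbar F p = dzbar G p := by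
  have h1 : (fun q => (F q).1) =ᶠ[𝓝 p] fun q => (G q).1 := h.fun_comp Prod.fst
  have h2 : (fun q => (F q).2) =ᶠ[𝓝 p] fun q => (G q).2 := h.fun_comp Prod.snd
  simp only [dzbar, h1.pdx_eq, h1.pdt_eq, h2.pdx_eq, h2.pdt_eq]

lemma HasFDerivAt.hmul {F' G' : Hyp →L[ℝ] Hyp} (hF : HasFDerivAt F F' p)
    (hG : HasFDerivAt G G' p) :
    HasFDerivAt (fun q => hmul (F q) (G q))
      (hmulL.precompR Hyp (F p) G' + hmulL.precompL Hyp F' (G p)) p := by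
  simpa using hmulL.hasFDerivAt_of_bilinear hF hG

lemma DifferentiableAt.hmul (hF : DifferentiableAt ℝ F p) (hG : DifferentiableAt ℝ G p) :
    DifferentiableAt ℝ (fun q => hmul (F q) (G q)) p :=
  (hF.hasFDerivAt.hmul hG.hasFDerivAt).differentiableAt

lemma DifferentiableAt.hconj (hF : DifferentiableAt ℝ F p) :
    DifferentiableAt ℝ (fun q => hconj (F q)) p :=
  hconjL.differentiableAt.comp p hF

lemma DifferentiableAt.ofDzDzbar {a b : Hyp → Hyp} (ha : DifferentiableAt ℝ a p)
    (hb : DifferentiableAt ℝ b p) : DifferentiableAt ℝ (fun q => ofDzDzbar (a q) (b q)) p :=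
  ((ContinuousLinearMap.smulRightL ℝ Hyp Hyp _).differentiableAt.comp p (ha.add hb)).add
    ((ContinuousLinearMap.smulRightL ℝ Hyp Hyp _).differentiableAt.comp p
      ((hmulL hj).differentiableAt.comp p (ha.sub hb)))

lemma dzbar_sub (hF : DifferentiableAt ℝ F p) (hG : DifferentiableAt ℝ G p) :
    dzbar (fun q => F q - G q) p = dzbar F p - dzbar G p := by
  rw [HasFDerivAt.dzbar_eq (F := fun q => F q - G q) (hF.hasFDerivAt.sub hG.hasFDerivAt),
    map_sub, hF.hasFDerivAt.dzbar_eq, hG.hasFDerivAt.dzbar_eq]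

lemma dz_hmul (hF : DifferentiableAt ℝ F p) (hG : DifferentiableAt ℝ G p) :
    dz (fun q => hmul (F q) (G q)) p = hmul (dz F p) (G p) + hmul (F p) (dz G p) := by
  rw [(hF.hasFDerivAt.hmul hG.hasFDerivAt).dz_eq, hF.hasFDerivAt.dz_eq, hG.hasFDerivAt.dz_eq]
  ext <;> simp [dzL_apply, hmul, hj] <;> ring

lemma dzbar_hmul (hF : DifferentiableAt ℝ F p) (hG : DifferentiableAt ℝ G p) :
    dzbar (fun q => hmul (F q) (G q)) p = hmul (dzbar F p) (G p) + hmul (F p) (dzbar G p) := by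
  rw [(hF.hasFDerivAt.hmul hG.hasFDerivAt).dzbar_eq, hF.hasFDerivAt.dzbar_eq,
    hG.hasFDerivAt.dzbar_eq]
  ext <;> simp [dzbarL_apply, hmul, hj] <;> ring

lemma dz_hconj (hF : DifferentiableAt ℝ F p) :
    dz (fun q => hconj (F q)) p = hconj (dzbar F p) := by
  rw [HasFDerivAt.dz_eq (F := fun q => hconj (F q)) (hconjL.hasFDerivAt.comp p hF.hasFDerivAt),
    hF.hasFDerivAt.dzbar_eq]
  ext <;> simp [dzL_apply, dzbarL_apply, hmul, hj, hconj] <;> ring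

lemma dzbar_hconj (hF : DifferentiableAt ℝ F p) :
    dzbar (fun q => hconj (F q)) p = hconj (dz F p) := by
  rw [HasFDerivAt.dzbar_eq (F := fun q => hconj (F q)) (hconjL.hasFDerivAt.comp p hF.hasFDerivAt),
    hF.hasFDerivAt.dz_eq]
  ext <;> simp [dzL_apply, dzbarL_apply, hmul, hj, hconj] <;> ring

lemma dzbar_dz_comm (hG : ∀ᶠ q in 𝓝 p, DifferentiableAt ℝ G q)
    (hz : DifferentiableAt ℝ (dz G) p) (hzbar : DifferentiableAt ℝ (dzbar G) p) :
    dzbar (dz G) p = dz (dzbar G) p := by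
  set G' := fun q => ofDzDzbar (dz G q) (dzbar G q)
  have hG' : ∀ᶠ q in 𝓝 p, HasFDerivAt G (G' q) q := hG.mono fun q hq => by
    simpa only [G', hq.hasFDerivAt.dz_eq, hq.hasFDerivAt.dzbar_eq, ofDzDzbar_dzL_dzbarL]
      using hq.hasFDerivAt
  have hG'' := (hz.ofDzDzbar hzbar).hasFDerivAt
  have hdz : dz G = fun q => dzL (G' q) := funext fun q => (dzL_ofDzDzbar _ _).symm
  have hdzbar : dzbar G = fun q => dzbarL (G' q) := funext fun q => (dzbarL_ofDzDzbar _ _).symm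
  rw [hdz, hdzbar, HasFDerivAt.dzbar_eq (F := fun q => dzL (G' q)) (dzL.hasFDerivAt.comp p hG''),
    HasFDerivAt.dz_eq (F := fun q => dzbarL (G' q)) (dzbarL.hasFDerivAt.comp p hG'')]
  exact dzbarL_comp_dzL (second_derivative_symmetric_of_eventually hG' hG'' _ _)

lemma dzbar_dz_sub_hmul_of_vekua {W w φ ψ : Hyp → Hyp}
    (hW : ∀ᶠ q in 𝓝 p, DifferentiableAt ℝ W q) (hw : DifferentiableAt ℝ w p)
    (hφ : DifferentiableAt ℝ φ p) (hψ : DifferentiableAt ℝ ψ p)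
    (hvekua : dzbar W =ᶠ[𝓝 p] fun q => hmul (ψ q) (hconj (W q)))
    (hwdef : ∀ q, w q = dz W q - hmul (φ q) (hconj (W q))) :
    dzbar w p = hmul (dz ψ p - dzbar φ p) (hconj (W p))
      + hmul (ψ p) (hconj (hmul (ψ p) (hconj (W p)))) - hmul (φ p) (hconj (dz W p)) := by
  have hWp : DifferentiableAt ℝ W p := hW.self_of_nhds
  have hWbar := hWp.hconj
  have hdzW : DifferentiableAt ℝ (dz W) p := by
    have h : dz W = fun q => w q + hmul (φ q) (hconj (W q)) :=
      funext fun q => by rw [hwdef]; abel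
    exact h ▸ hw.add (hφ.hmul hWbar)
  have hdzbarW : DifferentiableAt ℝ (dzbar W) p := (hψ.hmul hWbar).congr_of_eventuallyEq hvekua
  rw [show w = fun q => dz W q - hmul (φ q) (hconj (W q)) from funext hwdef,
    dzbar_sub hdzW (hφ.hmul hWbar), dzbar_dz_comm hW hdzW hdzbarW, hvekua.dz_eq,
    dz_hmul hψ hWbar, dz_hconj hWp, dzbar_hmul hφ hWbar, dzbar_hconj hWp, hvekua.self_of_nhds]
  ext <;> simp [hmul] <;> ring

lemma ContDiffAt.differentiableAt_dz (h : ContDiffAt ℝ 2 G p) : DifferentiableAt ℝ (dz G) p :=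
  (dzL.differentiableAt.comp p ((h.fderiv_right le_rfl).differentiableAt one_ne_zero))
    |>.congr_of_eventuallyEq <| (h.eventually_differentiableAt two_ne_zero (by simp)).mono
      fun _ hq => hq.hasFDerivAt.dz_eq

lemma ContDiffAt.differentiableAt_dzbar (h : ContDiffAt ℝ 2 G p) :
    DifferentiableAt ℝ (dzbar G) p :=
  (dzbarL.differentiableAt.comp p ((h.fderiv_right le_rfl).differentiableAt one_ne_zero))
    |>.congr_of_eventuallyEq <| (h.eventually_differentiableAt two_ne_zero (by simp)).mono
      fun _ hq => hq.hasFDerivAt.dzbar_eq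

lemma ContDiffAt.dzbar_dz_comm (h : ContDiffAt ℝ 2 G p) : dzbar (dz G) p = dz (dzbar G) p :=
  _root_.dzbar_dz_comm (h.eventually_differentiableAt two_ne_zero (by simp))
    h.differentiableAt_dz h.differentiableAt_dzbar

lemma hdiv_rz_eq_dz_log {f : Hyp → ℝ} (hf : DifferentiableAt ℝ f p) (hpos : 0 < f p) :
    hdiv (rz f p) (f p, 0) = dz (fun q => (Real.log (f q), 0)) p := by
  have hx := hf.hasFDerivAt.hasDerivAt_lineX
  have ht := hf.hasFDerivAt.hasDerivAt_lineT
  simp only [dz, rz, pdx, pdt, deriv_const, (hx.log hpos.ne').deriv, (ht.log hpos.ne').deriv,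
    hx.deriv, ht.deriv]
  ext <;> simp [hdiv, hinv, hmul] <;> field_simp

lemma hdiv_rzbar_eq_dzbar_log {f : Hyp → ℝ} (hf : DifferentiableAt ℝ f p) (hpos : 0 < f p) :
    hdiv (rzbar f p) (f p, 0) = dzbar (fun q => (Real.log (f q), 0)) p := by
  have hx := hf.hasFDerivAt.hasDerivAt_lineX
  have ht := hf.hasFDerivAt.hasDerivAt_lineT
  simp only [dzbar, rzbar, pdx, pdt, deriv_const, (hx.log hpos.ne').deriv,
    (ht.log hpos.ne').deriv, hx.deriv, ht.deriv]
  ext <;> simp [hdiv, hinv, hmul] <;> field_simp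

lemma hdiv_rz_eventuallyEq_dz_log {f : Hyp → ℝ} (hf : ContDiffAt ℝ 2 f p) (hpos : 0 < f p) :
    (fun q => hdiv (rz f q) (f q, 0)) =ᶠ[𝓝 p] dz (fun q => (Real.log (f q), 0)) :=
  ((hf.eventually_differentiableAt two_ne_zero (by simp)).and
    (hf.continuousAt.eventually (lt_mem_nhds hpos))).mono fun _ hq => hdiv_rz_eq_dz_log hq.1 hq.2

lemma hdiv_rzbar_eventuallyEq_dzbar_log {f : Hyp → ℝ} (hf : ContDiffAt ℝ 2 f p)
    (hpos : 0 < f p) :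
    (fun q => hdiv (rzbar f q) (f q, 0)) =ᶠ[𝓝 p] dzbar (fun q => (Real.log (f q), 0)) :=
  ((hf.eventually_differentiableAt two_ne_zero (by simp)).and
    (hf.continuousAt.eventually (lt_mem_nhds hpos))).mono
      fun _ hq => hdiv_rzbar_eq_dzbar_log hq.1 hq.2

end Wirtinger

lemma hconj_hdiv_rzbar (f : Hyp → ℝ) (p : Hyp) (r : ℝ) :
    hconj (hdiv (rzbar f p) (r, 0)) = hdiv (rz f p) (r, 0) := by
  ext <;> simp [hconj, hdiv, hinv, hmul, rz, rzbar, neg_div]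

/-- if `W ∈ C¹(Ω)` solves the main Vekua equation `W_z̄ = (f_z̄/f)W̄` and
`w = W_z − (f_z/f)W̄` is C¹, then `w` solves `w_z̄ = −(f_z/f)w̄` on `Ω`. -/
theorem FG_derivative_solves_successor_vekua (Ω : Set Hyp) (hΩ : IsOpen Ω)
    (f : Hyp → ℝ) (hf : ContDiffOn ℝ 2 f Ω) (hfpos : ∀ p ∈ Ω, 0 < f p)
    (W : Hyp → Hyp) (hW : ContDiffOn ℝ 1 W Ω)
    (hMainVekua : ∀ p ∈ Ω, dzbar W p = hmul (hdiv (rzbar f p) (f p, 0)) (hconj (W p)))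
    (w : Hyp → Hyp)
    (hwdef : ∀ p, w p = dz W p - hmul (hdiv (rz f p) (f p, 0)) (hconj (W p)))
    (hw : ContDiffOn ℝ 1 w Ω) :
    ∀ p ∈ Ω, dzbar w p = - hmul (hdiv (rz f p) (f p, 0)) (hconj (w p)) := by
  intro p hp
  have hΩp : Ω ∈ 𝓝 p := hΩ.mem_nhds hp
  have hfp : ContDiffAt ℝ 2 f p := hf.contDiffAt hΩp
  have hpos : 0 < f p := hfpos p hp
  have hlog : ContDiffAt ℝ 2 (fun q => ((Real.log (f q), 0) : Hyp)) p :=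
    (hfp.log hpos.ne').prodMk contDiffAt_const
  have hφ := hdiv_rz_eventuallyEq_dz_log hfp hpos
  have hψ := hdiv_rzbar_eventuallyEq_dzbar_log hfp hpos
  rw [dzbar_dz_sub_hmul_of_vekua
      ((hW.differentiableOn one_ne_zero).eventually_differentiableAt hΩp)
      ((hw.differentiableOn one_ne_zero).differentiableAt hΩp)
      (hlog.differentiableAt_dz.congr_of_eventuallyEq hφ)
      (hlog.differentiableAt_dzbar.congr_of_eventuallyEq hψ)
      (Filter.mem_of_superset hΩp hMainVekua) hwdef,
    hφ.dzbar_eq, hψ.dz_eq, hlog.dzbar_dz_comm, sub_self, hwdef p, ← hconj_hdiv_rzbar f p (f p)]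
  ext <;> simp [hmul, hconj] <;> ring
end
end
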